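/- Consider two experts with thresholds θ₁ = (1 + t̃)/2 and θ₂ = 1, cost c = 1, and T rounds in each of which a single individual arrives with p(t) uniform on (t̃, 1), for fixed t̃ ∈ [0,1). Always assigning to expert 1 yields expected cumulative utility −T(1 − t̃)/8, while always assigning to expert 2 yields expected cumulative utility 0. Hence the regret of the first algorithm is T(1 − t̃)/8, linear in T. -/

import Mathlib

open MeasureTheory Set

theorem setIntegral_Ioo_ite_le_sub {a b m c : ℝ} (ham : a < m) (hmb : m ≤ b) :
    ∫ p in Ioo a b, (if m ≤ p then p - c else 0) = ((b - c) ^ 2 - (m - c) ^ 2) / 2 := by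
  have h_indicator : (fun p : ℝ => if m ≤ p then p - c else 0) = (Ici m).indicator (· - c) := by
    ext p; simp [indicator]
  have h_inter : Ioo a b ∩ Ici m = Ico m b := by
    ext x
    simp only [mem_inter_iff, mem_Ioo, mem_Ici, mem_Ico]
    constructor
    · rintro ⟨⟨_, hxb⟩, hmx⟩; exact ⟨hmx, hxb⟩
    · rintro ⟨hmx, hxb⟩; exact ⟨⟨ham.trans_le hmx, hxb⟩, hmx⟩
  rw [h_indicator, setIntegral_indicator measurableSet_Ici, h_inter, integral_Ico_eq_integral_Ioo,
    ← integral_Ioc_eq_integral_Ioo, ← intervalIntegral.integral_of_le hmb,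
    intervalIntegral.integral_comp_sub_right (fun x => x), integral_id]

/-- Linear-regret instance with `c = 1`: expert 1 has threshold `(1+tq)/2`,
expert 2 threshold `1`; each round an individual arrives with `p` uniform on
`(tq, 1)` (here `tq` plays the role of `t̃`). Always using expert 1 yields
expected cumulative utility `−T(1−tq)/8`, always using expert 2 yields `0`,
so the regret of the first algorithm is `T(1−tq)/8`, linear in `T`. -/
theorem linear_regret_instance_c_one
    (tq : ℝ) (ht : 0 ≤ tq ∧ tq < 1) (T : ℕ) :
    (T : ℝ) * ((1 / (1 - tq)) *
        ∫ p in Ioo tq (1 : ℝ), (if (1 + tq) / 2 ≤ p then p - 1 else 0))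
      = -(T * (1 - tq) / 8) ∧
    (T : ℝ) * ((1 / (1 - tq)) *
        ∫ p in Ioo tq (1 : ℝ), (if (1 : ℝ) ≤ p then p - 1 else 0))
      = 0 ∧
    (T : ℝ) * ((1 / (1 - tq)) *
        ∫ p in Ioo tq (1 : ℝ), (if (1 : ℝ) ≤ p then p - 1 else 0))
      - (T : ℝ) * ((1 / (1 - tq)) *
        ∫ p in Ioo tq (1 : ℝ), (if (1 + tq) / 2 ≤ p then p - 1 else 0))
      = T * (1 - tq) / 8 := by
  obtain ⟨-, ht1⟩ := ht
  have h_ne : (1 : ℝ) - tq ≠ 0 := by linarith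
  have h_expert1 := setIntegral_Ioo_ite_le_sub (c := 1) (by linarith : tq < (1 + tq) / 2)
    (by linarith : (1 + tq) / 2 ≤ 1)
  have h_expert2 := setIntegral_Ioo_ite_le_sub (c := 1) ht1 le_rfl
  rw [h_expert1, h_expert2]
  refine ⟨?_, ?_, ?_⟩ <;> field_simp <;> ring
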